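/- arXiv:math/0109091 — 5 statements merged into one kernel-verified Lean document; each statement's English description precedes it below -/
import Mathlib

section
/- Given a crossed square (L,M,N,P) with maps λ : L → M, λ' : L → N, μ : M → P, ν : N → P, the map ∂ : M ⋊ N → P, (m,n) ↦ (μm)(νn) is a group homomorphism from the semidirect product M ⋊ N (with N acting on M via P) to P, and the map L → M ⋊ N, l ↦ (λ(l)^{-1}, λ'(l)) is a group homomorphism whose image is contained in the kernel of ∂. -/
/-- A crossed square (Loday): a commutative square of groups
`λ : L → M`, `λ' : L → N`, `μ : M → P`, `ν : N → P`, with `P` acting on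
`L`, `M`, `N` (and `M`, `N` acting on everything via `μ`, `ν`), and a
function `h : M × N → L`, such that `λ, λ', μ, ν` and `μλ = νλ'` are crossed
modules, `λ, λ'` are `P`-equivariant, and the `h`-axioms hold. -/
structure CrossedSquare (L M N P : Type*)
    [Group L] [Group M] [Group N] [Group P] where
  lam : L →* M
  lam' : L →* N
  mu : M →* P
  nu : N →* P
  actL : P →* MulAut L
  actM : P →* MulAut M
  actN : P →* MulAut N
  h : M → N → L
  comm : ∀ l : L, mu (lam l) = nu (lam' l)
  lam_equivariant : ∀ (p : P) (l : L), lam (actL p l) = actM p (lam l)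
  lam'_equivariant : ∀ (p : P) (l : L), lam' (actL p l) = actN p (lam' l)
  mu_equivariant : ∀ (p : P) (m : M), mu (actM p m) = p * mu m * p⁻¹
  nu_equivariant : ∀ (p : P) (n : N), nu (actN p n) = p * nu n * p⁻¹
  peiffer_lam : ∀ l l' : L, actL (mu (lam l)) l' = l * l' * l⁻¹
  peiffer_lam' : ∀ l l' : L, actL (nu (lam' l)) l' = l * l' * l⁻¹
  peiffer_mu : ∀ m m' : M, actM (mu m) m' = m * m' * m⁻¹
  peiffer_nu : ∀ n n' : N, actN (nu n) n' = n * n' * n⁻¹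
  h_mul_left : ∀ (m m' : M) (n : N),
    h (m * m') n = actL (mu m) (h m' n) * h m n
  h_mul_right : ∀ (m : M) (n n' : N),
    h m (n * n') = h m n * actL (nu n) (h m n')
  lam_h : ∀ (m : M) (n : N), lam (h m n) = m * actM (nu n) m⁻¹
  lam'_h : ∀ (m : M) (n : N), lam' (h m n) = actN (mu m) n * n⁻¹
  h_lam : ∀ (l : L) (n : N), h (lam l) n = l * actL (nu n) l⁻¹
  h_lam' : ∀ (m : M) (l : L), h m (lam' l) = actL (mu m) l * l⁻¹
  h_equivariant : ∀ (p : P) (m : M) (n : N),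
    actL p (h m n) = h (actM p m) (actN p n)

/-- For a crossed square `(L,M,N,P)`, the map `∂ : M ⋊ N → P`,
`(m,n) ↦ (μm)(νn)` is a group homomorphism from the semidirect product
`M ⋊ N` (with `N` acting on `M` via `P`) to `P`, and
`l ↦ (λ(l)⁻¹, λ'(l))` is a group homomorphism `L → M ⋊ N` whose image is
contained in the kernel of `∂`. -/
theorem crossedSquare_semidirect_boundary {L M N P : Type*}
    [Group L] [Group M] [Group N] [Group P]
    (cs : CrossedSquare L M N P) :
    ∃ d : M ⋊[cs.actM.comp cs.nu] N →* P,
      (∀ (m : M) (n : N), d ⟨m, n⟩ = cs.mu m * cs.nu n) ∧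
      ∃ d₂ : L →* M ⋊[cs.actM.comp cs.nu] N,
        (∀ l : L, d₂ l = ⟨(cs.lam l)⁻¹, cs.lam' l⟩) ∧
        d₂.range ≤ d.ker := by

  refine ⟨{ toFun := fun x => cs.mu x.left * cs.nu x.right
            map_one' := by simp
            map_mul' := by
              intro a b
              simp only [SemidirectProduct.mul_left, SemidirectProduct.mul_right,
                map_mul, MonoidHom.comp_apply, cs.mu_equivariant]
              group },
    fun m n => rfl, ?_⟩
  refine ⟨{ toFun := fun l => ⟨(cs.lam l)⁻¹, cs.lam' l⟩
            map_one' := by ext <;> simp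
            map_mul' := by
              intro l l'
              ext
              · simp only [SemidirectProduct.mul_left, map_mul, MonoidHom.comp_apply,
                  ← cs.comm, cs.peiffer_mu, mul_inv_rev]
                group
              · simp [SemidirectProduct.mul_right] },
    fun l => rfl, ?_⟩
  rintro x ⟨l, rfl⟩
  simp [MonoidHom.mem_ker, cs.comm]
end

section
/- For a crossed square (L,M,N,P), the image of l ↦ (λ(l)^{-1}, λ'(l)) is a normal subgroup of ker(μ∗ν : M⋊N → P), and the quotient (ker(μ∗ν : M⋊N → P)) / Im(l ↦ (λ(l)^{-1}, λ'(l))) is a group (π₂ of the classifying space). -/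
/-- For a crossed square `(L,M,N,P)`, with `μ∗ν : M ⋊ N → P`,
`(m,n) ↦ (μm)(νn)` and `d₂ : L → M ⋊ N`, `l ↦ (λ(l)⁻¹, λ'(l))`, the image of
`d₂` is a normal subgroup of `ker(μ∗ν)`, so that the quotient
`ker(μ∗ν)/Im(d₂)` is a group (it is `π₂` of the classifying space). -/
theorem crossedSquare_pi2_quotient {L M N P : Type*}
    [Group L] [Group M] [Group N] [Group P]
    (cs : CrossedSquare L M N P) :
    ∃ (d : M ⋊[cs.actM.comp cs.nu] N →* P)
      (d₂ : L →* M ⋊[cs.actM.comp cs.nu] N),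
      (∀ (m : M) (n : N), d ⟨m, n⟩ = cs.mu m * cs.nu n) ∧
      (∀ l : L, d₂ l = ⟨(cs.lam l)⁻¹, cs.lam' l⟩) ∧
      d₂.range ≤ d.ker ∧
      (d₂.range.subgroupOf d.ker).Normal := by
  classical
  have comp : ∀ (q q' : P) (x : M),
      cs.actM q (cs.actM q' x) = cs.actM (q * q') x := fun q q' x => by
    rw [map_mul]; rfl
  refine ⟨MonoidHom.mk' (fun x => cs.mu x.left * cs.nu x.right) ?_,
    MonoidHom.mk' (fun l => ⟨(cs.lam l)⁻¹, cs.lam' l⟩) ?_, ?_, ?_, ?_, ?_⟩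
  · intro a b
    simp only [SemidirectProduct.mul_left, SemidirectProduct.mul_right, map_mul,
      MonoidHom.comp_apply, cs.mu_equivariant]
    group
  · intro l l'
    have h1 : ((cs.lam (l * l'))⁻¹ : M)
        = (cs.lam l)⁻¹ * (cs.actM.comp cs.nu) (cs.lam' l) (cs.lam l')⁻¹ := by
      simp only [MonoidHom.comp_apply, ← cs.comm, map_inv, cs.peiffer_mu, map_mul, mul_inv_rev]
      group
    have h2 : cs.lam' (l * l') = cs.lam' l * cs.lam' l' := map_mul _ _ _
    show (⟨(cs.lam (l * l'))⁻¹, cs.lam' (l * l')⟩ : M ⋊[cs.actM.comp cs.nu] N)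
      = ⟨(cs.lam l)⁻¹ * (cs.actM.comp cs.nu) (cs.lam' l) (cs.lam l')⁻¹,
          cs.lam' l * cs.lam' l'⟩
    rw [h1, h2]
  · intro m n; rfl
  · intro l; rfl
  · rintro x ⟨l, rfl⟩
    simp only [MonoidHom.mem_ker, MonoidHom.mk'_apply, map_inv, cs.comm]
    group
  · constructor
    rintro ⟨x, hx⟩ hmem ⟨g, hg⟩
    rw [Subgroup.mem_subgroupOf] at hmem ⊢
    obtain ⟨l, hl⟩ := hmem
    simp only [MonoidHom.mk'_apply] at hl
    simp only [MonoidHom.mem_ker, MonoidHom.mk'_apply] at hg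
    set p := cs.nu g.right with hp
    set a := cs.lam l with ha
    set m := g.left with hm
    have hmu : cs.mu m = p⁻¹ := by rw [eq_inv_iff_mul_eq_one]; exact hg
    refine ⟨cs.actL p l, ?_⟩
    simp only [MonoidHom.mk'_apply, Subgroup.coe_mul, Subgroup.coe_inv]
    rw [← hl]
    have hleft : (g * (⟨a⁻¹, cs.lam' l⟩ : M ⋊[cs.actM.comp cs.nu] N) * g⁻¹).left
        = cs.actM p a⁻¹ := by
      rw [SemidirectProduct.mul_left, SemidirectProduct.mul_left,
        SemidirectProduct.inv_left, SemidirectProduct.mul_right]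
      simp only [MonoidHom.comp_apply, comp, ← map_mul]
      have e1 : g.right * cs.lam' l * (g.right * cs.lam' l)⁻¹ * g.right
          = g.right := by group
      have e2 : cs.nu (g.right * cs.lam' l * g.right⁻¹)
          = p * cs.mu a * p⁻¹ := by
        simp only [map_mul, map_inv, ha, cs.comm, hp]
      rw [show g.right * cs.lam' l * g.right⁻¹ = g.right * cs.lam' l * g.right⁻¹ from rfl]
      rw [e2, ← comp, ← comp, cs.peiffer_mu]
      calc m * cs.actM p a⁻¹ *
            cs.actM p (a * cs.actM p⁻¹ m⁻¹ * a⁻¹)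
          = m * cs.actM p (a⁻¹ * (a * cs.actM p⁻¹ m⁻¹ * a⁻¹)) := by
            rw [mul_assoc, ← map_mul]
        _ = m * cs.actM p (cs.actM p⁻¹ m⁻¹ * a⁻¹) := by
            rw [show a⁻¹ * (a * cs.actM p⁻¹ m⁻¹ * a⁻¹)
              = cs.actM p⁻¹ m⁻¹ * a⁻¹ by group]
        _ = m * (m⁻¹ * cs.actM p a⁻¹) := by
            rw [map_mul, comp, mul_inv_cancel, map_one, MulAut.one_apply]
        _ = cs.actM p a⁻¹ := by group
    have hright : (g * (⟨a⁻¹, cs.lam' l⟩ : M ⋊[cs.actM.comp cs.nu] N) * g⁻¹).right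
        = cs.actN p (cs.lam' l) := by
      rw [SemidirectProduct.mul_right, SemidirectProduct.mul_right,
        SemidirectProduct.inv_right, cs.peiffer_nu]
    have : (g * (⟨a⁻¹, cs.lam' l⟩ : M ⋊[cs.actM.comp cs.nu] N) * g⁻¹)
        = ⟨cs.actM p a⁻¹, cs.actN p (cs.lam' l)⟩ := by
      cases h : (g * (⟨a⁻¹, cs.lam' l⟩ : M ⋊[cs.actM.comp cs.nu] N) * g⁻¹)
      simp only [h] at hleft hright
      simp_all
    rw [this]
    simp only [cs.lam_equivariant, cs.lam'_equivariant, map_inv]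
    rfl
end

section
/- For a crossed square (L,M,N,P), the subgroup (ker λ) ∩ (ker λ') of L is central in L and is invariant under the actions of M, N and P; moreover the actions of μ(M) and ν(N) on (ker λ) ∩ (ker λ') are trivial. -/
/-- For a crossed square `(L,M,N,P)`, the subgroup `(ker λ) ∩ (ker λ')` of
`L` is central in `L` and invariant under the actions of `P` (hence of `M`
and `N`, which act via `P`); moreover the actions of `μ(M)` and `ν(N)` on
`(ker λ) ∩ (ker λ')` are trivial. -/
theorem crossedSquare_ker_inter_ker {L M N P : Type*}
    [Group L] [Group M] [Group N] [Group P]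
    (cs : CrossedSquare L M N P) :
    cs.lam.ker ⊓ cs.lam'.ker ≤ Subgroup.center L ∧
    (∀ p : P, ∀ x ∈ cs.lam.ker ⊓ cs.lam'.ker,
      cs.actL p x ∈ cs.lam.ker ⊓ cs.lam'.ker) ∧
    (∀ m : M, ∀ x ∈ cs.lam.ker ⊓ cs.lam'.ker, cs.actL (cs.mu m) x = x) ∧
    (∀ n : N, ∀ x ∈ cs.lam.ker ⊓ cs.lam'.ker, cs.actL (cs.nu n) x = x) := by
  have hone_r : ∀ m : M, cs.h m 1 = 1 := by
    intro m
    have := cs.h_mul_right m 1 1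
    simpa using this
  have hone_l : ∀ n : N, cs.h 1 n = 1 := by
    intro n
    have := cs.h_mul_left 1 1 n
    simpa using this
  have hmu : ∀ m : M, ∀ x ∈ cs.lam.ker ⊓ cs.lam'.ker, cs.actL (cs.mu m) x = x := by
    intro m x hx
    obtain ⟨hx1, hx2⟩ := hx
    have hx2' : cs.lam' x = 1 := hx2
    have h1 := cs.h_lam' m x
    rw [hx2', hone_r] at h1
    exact mul_inv_eq_one.mp h1.symm
  have hnu : ∀ n : N, ∀ x ∈ cs.lam.ker ⊓ cs.lam'.ker, cs.actL (cs.nu n) x = x := by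
    intro n x hx
    obtain ⟨hx1, hx2⟩ := hx
    have hx1' : cs.lam x = 1 := hx1
    have h1 := cs.h_lam x n
    rw [hx1', hone_l] at h1
    have h2 : x⁻¹ = cs.actL (cs.nu n) x⁻¹ := mul_eq_one_iff_inv_eq.mp h1.symm
    rw [map_inv] at h2
    exact (inv_injective h2).symm
  refine ⟨?_, ?_, hmu, hnu⟩
  · intro x hx
    rw [Subgroup.mem_center_iff]
    intro l
    have h1 := cs.peiffer_lam l x
    rw [hmu (cs.lam l) x hx] at h1
    conv_rhs => rw [h1]
    group
  · intro p x hx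
    obtain ⟨hx1, hx2⟩ := hx
    constructor
    · show cs.lam (cs.actL p x) = 1
      rw [cs.lam_equivariant, show cs.lam x = 1 from hx1, map_one]
    · show cs.lam' (cs.actL p x) = 1
      rw [cs.lam'_equivariant, show cs.lam' x = 1 from hx2, map_one]
end

section
/- In any crossed n-cube of groups (M_A), for each i ∈ ⟨n⟩ and each A ⊆ ⟨n⟩ with i ∈ A, the map μ_i : M_A → M_{A∖{i}} together with the action ^b a := h(b,a)a (for b ∈ M_{A∖{i}}, a ∈ M_A) forms a crossed module. -/
/-- Transport of an element along an equality of index sets. -/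
def fc {n : ℕ} {M : Finset (Fin n) → Type*} {A B : Finset (Fin n)}
    (hAB : A = B) (a : M A) : M B := hAB ▸ a

namespace CNC

variable {n : ℕ}

lemma erase_swap (A : Finset (Fin n)) (i j : Fin n) :
    (A.erase j).erase i = (A.erase i).erase j := by
  ext x; simp [Finset.mem_erase]; try tauto

lemma erase_union (A B : Finset (Fin n)) (i : Fin n) :
    A.erase i ∪ B.erase i = (A ∪ B).erase i := by
  ext x; simp [Finset.mem_erase, Finset.mem_union]; try tauto

lemma erase_union_of_mem {B : Finset (Fin n)} {i : Fin n} (A : Finset (Fin n))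
    (hi : i ∈ B) : A.erase i ∪ B = A ∪ B := by
  ext x; simp [Finset.mem_erase, Finset.mem_union]
  rcases Decidable.em (x = i) with h | h <;> simp [h, hi] <;> tauto

lemma union_erase_of_mem {A : Finset (Fin n)} {i : Fin n} (B : Finset (Fin n))
    (hi : i ∈ A) : A ∪ B.erase i = A ∪ B := by
  ext x; simp [Finset.mem_erase, Finset.mem_union]
  rcases Decidable.em (x = i) with h | h <;> simp [h, hi] <;> tauto

lemma union_self (A : Finset (Fin n)) : A ∪ A = A := by
  ext x; simp

lemma union_comm' (A B : Finset (Fin n)) : B ∪ A = A ∪ B := by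
  ext x; simp [Finset.mem_union]; try tauto

lemma union_left_absorb (A B : Finset (Fin n)) : A ∪ (A ∪ B) = A ∪ B := by
  ext x; simp [Finset.mem_union]; try tauto

lemma union_right_absorb (A B : Finset (Fin n)) : B ∪ (A ∪ B) = A ∪ B := by
  ext x; simp [Finset.mem_union]; try tauto

lemma jac1 (A B C : Finset (Fin n)) : A ∪ ((A ∪ B) ∪ C) = (A ∪ B) ∪ C := by
  ext x; simp [Finset.mem_union]; try tauto

lemma jac2 (A B C : Finset (Fin n)) : C ∪ ((C ∪ A) ∪ B) = (C ∪ A) ∪ B := by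
  ext x; simp [Finset.mem_union]; try tauto

lemma jac2' (A B C : Finset (Fin n)) : (C ∪ A) ∪ B = (A ∪ B) ∪ C := by
  ext x; simp [Finset.mem_union]; try tauto

lemma jac3 (A B C : Finset (Fin n)) : B ∪ ((B ∪ C) ∪ A) = (B ∪ C) ∪ A := by
  ext x; simp [Finset.mem_union]; try tauto

lemma jac3' (A B C : Finset (Fin n)) : (B ∪ C) ∪ A = (A ∪ B) ∪ C := by
  ext x; simp [Finset.mem_union]; try tauto

lemma union_of_subset {A B : Finset (Fin n)} (hAB : A ⊆ B) : A ∪ B = B :=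
  Finset.union_eq_right.mpr hAB


end CNC

open CNC commutatorElement in
/-- A crossed `n`-cube of groups (Ellis–Steiner): a family of groups `M A`
for `A ⊆ ⟨n⟩`, morphisms `μᵢ : M A → M (A∖{i})` and functions
`h : M A × M B → M (A∪B)` satisfying axioms (1)–(11), where `ᵃb` denotes
`h(a,b)·b`. -/
structure CrossedNCube (n : ℕ) (M : Finset (Fin n) → Type*)
    [∀ A, Group (M A)] where
  mu : ∀ (i : Fin n) (A : Finset (Fin n)), M A →* M (A.erase i)
  h : ∀ (A B : Finset (Fin n)), M A → M B → M (A ∪ B)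
  ax1 : ∀ (i : Fin n) (A : Finset (Fin n)) (hi : i ∉ A) (a : M A),
    mu i A a = fc (Finset.erase_eq_of_notMem hi).symm a
  ax2 : ∀ (i j : Fin n) (A : Finset (Fin n)) (a : M A),
    mu i (A.erase j) (mu j A a) =
      fc (erase_swap A i j).symm (mu j (A.erase i) (mu i A a))
  ax3 : ∀ (i : Fin n) (A B : Finset (Fin n)) (a : M A) (b : M B),
    mu i (A ∪ B) (h A B a b) =
      fc (erase_union A B i) (h (A.erase i) (B.erase i) (mu i A a) (mu i B b))
  ax4a : ∀ (i : Fin n) (A B : Finset (Fin n)), i ∈ A → ∀ hiB : i ∈ B,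
    ∀ (a : M A) (b : M B),
    h A B a b = fc (erase_union_of_mem A hiB) (h (A.erase i) B (mu i A a) b)
  ax4b : ∀ (i : Fin n) (A B : Finset (Fin n)), ∀ hiA : i ∈ A, i ∈ B →
    ∀ (a : M A) (b : M B),
    h A B a b = fc (union_erase_of_mem B hiA) (h A (B.erase i) a (mu i B b))
  ax5 : ∀ (A : Finset (Fin n)) (a a' : M A),
    h A A a a' = fc (union_self A).symm ⁅a, a'⁆
  ax6 : ∀ (A B : Finset (Fin n)) (a : M A) (b : M B),
    h A B a b = (fc (union_comm' A B) (h B A b a))⁻¹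
  ax7a : ∀ (A B : Finset (Fin n)) (b : M B), h A B 1 b = 1
  ax7b : ∀ (A B : Finset (Fin n)) (a : M A), h A B a 1 = 1
  ax8 : ∀ (A B : Finset (Fin n)) (a a' : M A) (b : M B),
    h A B (a * a') b =
      (fc (union_left_absorb A B) (h A (A ∪ B) a (h A B a' b)) *
          h A B a' b) * h A B a b
  ax9 : ∀ (A B : Finset (Fin n)) (a : M A) (b b' : M B),
    h A B a (b * b') =
      h A B a b *
        (fc (union_right_absorb A B) (h B (A ∪ B) b (h A B a b')) *
          h A B a b')
  ax10 : ∀ (A B C : Finset (Fin n)) (a : M A) (b : M B) (c : M C),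
    (fc (jac1 A B C)
        (h A ((A ∪ B) ∪ C) a (h (A ∪ B) C (h A B a⁻¹ b) c)) *
      h (A ∪ B) C (h A B a⁻¹ b) c) *
    fc (jac2' A B C)
      (fc (jac2 A B C)
          (h C ((C ∪ A) ∪ B) c (h (C ∪ A) B (h C A c⁻¹ a) b)) *
        h (C ∪ A) B (h C A c⁻¹ a) b) *
    fc (jac3' A B C)
      (fc (jac3 A B C)
          (h B ((B ∪ C) ∪ A) b (h (B ∪ C) A (h B C b⁻¹ c) a)) *
        h (B ∪ C) A (h B C b⁻¹ c) a) = 1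
  ax11 : ∀ (A B C : Finset (Fin n)) (hAB : A ⊆ B) (hAC : A ⊆ C)
      (a : M A) (b : M B) (c : M C),
    fc (union_of_subset (hAB.trans Finset.subset_union_left))
        (h A (B ∪ C) a (h B C b c)) * h B C b c =
      h B C (fc (union_of_subset hAB) (h A B a b) * b)
        (fc (union_of_subset hAC) (h A C a c) * c)

lemma CNC.erase_union_self {n : ℕ} (A : Finset (Fin n)) (i : Fin n) :
    A.erase i ∪ A = A := by
  ext x; simp [Finset.mem_erase, Finset.mem_union]; try tauto

/-- The action `ᵇa = h(b,a)·a` of `M (A∖{i})` on `M A`. -/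
def ncAct {n : ℕ} {M : Finset (Fin n) → Type*} [∀ A, Group (M A)]
    (X : CrossedNCube n M) (i : Fin n) (A : Finset (Fin n))
    (b : M (A.erase i)) (a : M A) : M A :=
  fc (CNC.erase_union_self A i) (X.h (A.erase i) A b a) * a

/-!
Restricted to the index sets `A ∖ {i}` and `A`, the axioms of a crossed `n`-cube are exactly
the crossed-module axioms. Write `h(b, a) ∈ M A` for `b ∈ M (A ∖ {i})`, so that `ᵇa = h(b, a) a`.
Axioms (8) and (9), with (5) turning `h(a, a')` into the commutator `[a, a']`, make `b ↦ ᵇ(·)`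
an action by automorphisms; axiom (3), with (1) for `i ∉ A ∖ {i}`, gives
`μᵢ h(b, a) = [b, μᵢ a]`, hence equivariance; axiom (4) gives `h(μᵢ a, a') = h(a, a') = [a, a']`
when `i ∈ A`, which is the Peiffer identity.
-/

section Transport

variable {n : ℕ} {M : Finset (Fin n) → Type*}

@[simp] lemma fc_fc {A B C : Finset (Fin n)} (e : A = B) (e' : B = C) (a : M A) :
    fc e' (fc e a) = fc (e.trans e') a := by subst e e'; rfl

@[simp] lemma fc_rfl {A : Finset (Fin n)} (e : A = A) (a : M A) : fc e a = a := rfl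

variable [∀ A, Group (M A)]

@[simp] lemma fc_mul {A B : Finset (Fin n)} (e : A = B) (x y : M A) :
    fc e (x * y) = fc e x * fc e y := by subst e; rfl

@[simp] lemma fc_one {A B : Finset (Fin n)} (e : A = B) : fc e (1 : M A) = 1 := by
  subst e; rfl

end Transport

namespace CrossedNCube

open commutatorElement

variable {n : ℕ} {M : Finset (Fin n) → Type*} [∀ A, Group (M A)] (X : CrossedNCube n M)

@[simp] lemma h_fc_left {A A' B : Finset (Fin n)} (e : A = A') (a : M A) (b : M B) :
    X.h A' B (fc e a) b = fc (congrArg (· ∪ B) e) (X.h A B a b) := by subst e; rfl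

@[simp] lemma h_fc_right {A B B' : Finset (Fin n)} (e : B = B') (a : M A) (b : M B) :
    X.h A B' a (fc e b) = fc (congrArg (A ∪ ·) e) (X.h A B a b) := by subst e; rfl

@[simp] lemma mu_fc {A A' : Finset (Fin n)} (i : Fin n) (e : A = A') (a : M A) :
    X.mu i A' (fc e a) = fc (congrArg (·.erase i) e) (X.mu i A a) := by subst e; rfl

lemma fc_h_self (A : Finset (Fin n)) (a a' : M A) :
    fc (CNC.union_self A) (X.h A A a a') = ⁅a, a'⁆ := by
  rw [X.ax5, fc_fc, fc_rfl]

def hAct (i : Fin n) (A : Finset (Fin n)) (b : M (A.erase i)) (a : M A) : M A :=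
  fc (CNC.erase_union_self A i) (X.h (A.erase i) A b a)

variable (i : Fin n) (A : Finset (Fin n))

lemma ncAct_eq_hAct_mul (b : M (A.erase i)) (a : M A) :
    ncAct X i A b a = X.hAct i A b a * a := rfl

lemma hAct_one_left (a : M A) : X.hAct i A 1 a = 1 := by
  rw [hAct, X.ax7a, fc_one]

lemma hAct_mul_left (b b' : M (A.erase i)) (a : M A) :
    X.hAct i A (b * b') a =
      X.hAct i A b (X.hAct i A b' a) * X.hAct i A b' a * X.hAct i A b a := by
  simp only [hAct, X.ax8, fc_mul, fc_fc, h_fc_right]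

lemma hAct_mul_right (b : M (A.erase i)) (a a' : M A) :
    X.hAct i A b (a * a') =
      X.hAct i A b a * (⁅a, X.hAct i A b a'⁆ * X.hAct i A b a') := by
  rw [← X.fc_h_self A a (X.hAct i A b a')]
  simp only [hAct, X.ax9, fc_mul, fc_fc, h_fc_right]

lemma mu_hAct (b : M (A.erase i)) (a : M A) :
    X.mu i A (X.hAct i A b a) = ⁅b, X.mu i A a⁆ := by
  rw [hAct, mu_fc, X.ax3, X.ax1 i (A.erase i) (Finset.notMem_erase i A) b,
    ← X.fc_h_self (A.erase i) b (X.mu i A a)]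
  simp only [h_fc_left, fc_fc]

lemma hAct_mu_left {i : Fin n} {A : Finset (Fin n)} (hi : i ∈ A) (a a' : M A) :
    X.hAct i A (X.mu i A a) a' = ⁅a, a'⁆ := by
  rw [← X.fc_h_self A a a', X.ax4a i A A hi hi a a', hAct, fc_fc]

lemma ncAct_one_left (a : M A) : ncAct X i A 1 a = a := by
  rw [ncAct_eq_hAct_mul, hAct_one_left, one_mul]

lemma ncAct_mul_left (b b' : M (A.erase i)) (a : M A) :
    ncAct X i A (b * b') a = ncAct X i A b (ncAct X i A b' a) := by
  simp only [ncAct_eq_hAct_mul, hAct_mul_left, hAct_mul_right, commutatorElement_def]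
  group

lemma ncAct_mul_right (b : M (A.erase i)) (a a' : M A) :
    ncAct X i A b (a * a') = ncAct X i A b a * ncAct X i A b a' := by
  simp only [ncAct_eq_hAct_mul, hAct_mul_right, commutatorElement_def]
  group

lemma mu_ncAct (b : M (A.erase i)) (a : M A) :
    X.mu i A (ncAct X i A b a) = b * X.mu i A a * b⁻¹ := by
  rw [ncAct_eq_hAct_mul, map_mul, mu_hAct, commutatorElement_def]
  group

lemma ncAct_mu_left {i : Fin n} {A : Finset (Fin n)} (hi : i ∈ A) (a a' : M A) :
    ncAct X i A (X.mu i A a) a' = a * a' * a⁻¹ := by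
  rw [ncAct_eq_hAct_mul, X.hAct_mu_left hi, commutatorElement_def]
  group

end CrossedNCube

/-- In any crossed `n`-cube of groups `(M_A)`, for each `i ∈ A ⊆ ⟨n⟩`, the
map `μᵢ : M A → M (A∖{i})`, together with the action `ᵇa := h(b,a)·a` of
`M (A∖{i})` on `M A`, is a crossed module. -/
theorem crossedNCube_mu_crossedModule {n : ℕ}
    {M : Finset (Fin n) → Type*} [∀ A, Group (M A)]
    (X : CrossedNCube n M) (i : Fin n) (A : Finset (Fin n)) (hi : i ∈ A) :
    -- `ncAct` is an action by automorphisms: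
    (∀ a : M A, ncAct X i A 1 a = a) ∧
    (∀ (b b' : M (A.erase i)) (a : M A),
      ncAct X i A (b * b') a = ncAct X i A b (ncAct X i A b' a)) ∧
    (∀ (b : M (A.erase i)) (a a' : M A),
      ncAct X i A b (a * a') = ncAct X i A b a * ncAct X i A b a') ∧
    -- equivariance:
    (∀ (b : M (A.erase i)) (a : M A),
      X.mu i A (ncAct X i A b a) = b * X.mu i A a * b⁻¹) ∧
    -- the Peiffer identity:
    (∀ a a' : M A, ncAct X i A (X.mu i A a) a' = a * a' * a⁻¹) :=
  ⟨X.ncAct_one_left i A, X.ncAct_mul_left i A, X.ncAct_mul_right i A,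
    X.mu_ncAct i A, X.ncAct_mu_left hi⟩
end

section
/- Let M, N be normal subgroups of a group P. The function M × N → M ⊗ N, (m,n) ↦ m ⊗ n, together with the maps λ : M ⊗ N → M (m⊗n ↦ m·^n m^{-1}) and λ' : M ⊗ N → N (m⊗n ↦ ^m n·n^{-1}), extend to group homomorphisms, and (M ⊗ N, M, N, P) with these maps, μ, ν the inclusions, and h(m,n) = m ⊗ n is a crossed square. -/
variable {P : Type} [Group P]

/-- Conjugation of an element of a normal subgroup by an element of the
ambient group, as an element of the normal subgroup: `ᵖh = p h p⁻¹`. -/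
def cnj {H : Subgroup P} (hH : H.Normal) (p : P) (h : H) : H :=
  ⟨p * (h : P) * p⁻¹, hH.conj_mem (h : P) h.2 p⟩

/-- The defining relations of the non-abelian tensor product `M ⊗ N` of two
normal subgroups `M`, `N` of `P` (acting on each other by conjugation):
`mm' ⊗ n = (ᵐm' ⊗ ᵐn)(m ⊗ n)` and `m ⊗ nn' = (m ⊗ n)(ⁿm ⊗ ⁿn')`. -/
def tensorRels (M N : Subgroup P) (hM : M.Normal) (hN : N.Normal) :
    Set (FreeGroup (M × N)) :=
  {r | (∃ (m m' : M) (n : N),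
          r = FreeGroup.of (m * m', n) *
              (FreeGroup.of (cnj hM (m : P) m', cnj hN (m : P) n) *
                FreeGroup.of (m, n))⁻¹) ∨
       (∃ (m : M) (n n' : N),
          r = FreeGroup.of (m, n * n') *
              (FreeGroup.of (m, n) *
                FreeGroup.of (cnj hM (n : P) m, cnj hN (n : P) n'))⁻¹)}

/-- The non-abelian tensor product `M ⊗ N` of normal subgroups `M`, `N` of
`P`, acting on each other by conjugation. -/
def NATensor (M N : Subgroup P) (hM : M.Normal) (hN : N.Normal) : Type :=
  PresentedGroup (tensorRels M N hM hN)

instance (M N : Subgroup P) (hM : M.Normal) (hN : N.Normal) :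
    Group (NATensor M N hM hN) := by unfold NATensor; infer_instance

/-- The generator `m ⊗ n` of the non-abelian tensor product. -/
def tmul {M N : Subgroup P} (hM : M.Normal) (hN : N.Normal) (m : M) (n : N) :
    NATensor M N hM hN :=
  PresentedGroup.of (m, n)

namespace NATaux

@[simp] lemma cnj_coe {H : Subgroup P} (hH : H.Normal) (p : P) (h : H) :
    (cnj hH p h : P) = p * h * p⁻¹ := rfl

lemma cnj_eq {H : Subgroup P} (hH : H.Normal) {p q : P} {a b : H}
    (h : p * (a : P) * p⁻¹ = q * (b : P) * q⁻¹) : cnj hH p a = cnj hH q b :=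
  Subtype.ext h

lemma cnj_eq' {H : Subgroup P} (hH : H.Normal) {p : P} {a b : H}
    (h : p * (a : P) * p⁻¹ = (b : P)) : cnj hH p a = b :=
  Subtype.ext h

@[simp] lemma cnj_one {H : Subgroup P} (hH : H.Normal) (a : H) : cnj hH 1 a = a :=
  Subtype.ext (by simp [cnj_coe])

lemma cnj_mul {H : Subgroup P} (hH : H.Normal) (p : P) (a b : H) :
    cnj hH p (a * b) = cnj hH p a * cnj hH p b :=
  Subtype.ext (by push_cast [cnj_coe]; group)

lemma cnj_inv {H : Subgroup P} (hH : H.Normal) (p : P) (a : H) :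
    cnj hH p a⁻¹ = (cnj hH p a)⁻¹ :=
  Subtype.ext (by push_cast [cnj_coe]; group)

lemma cnj_cnj {H : Subgroup P} (hH : H.Normal) (p q : P) (a : H) :
    cnj hH p (cnj hH q a) = cnj hH (p * q) a :=
  Subtype.ext (by simp [cnj_coe]; group)

variable {M N : Subgroup P} (hM : M.Normal) (hN : N.Normal)

lemma rel_left (m m' : M) (n : N) :
    tmul hM hN (m * m') n
      = tmul hM hN (cnj hM (m : P) m') (cnj hN (m : P) n) * tmul hM hN m n := by
  have hmem : (FreeGroup.of (m * m', n) *
      (FreeGroup.of (cnj hM (m : P) m', cnj hN (m : P) n) *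
        FreeGroup.of (m, n))⁻¹) ∈
      Subgroup.normalClosure (tensorRels M N hM hN) :=
    Subgroup.subset_normalClosure (Or.inl ⟨m, m', n, rfl⟩)
  have h1 : PresentedGroup.mk (tensorRels M N hM hN)
      (FreeGroup.of (m * m', n) *
        (FreeGroup.of (cnj hM (m : P) m', cnj hN (m : P) n) *
          FreeGroup.of (m, n))⁻¹) = 1 := (QuotientGroup.eq_one_iff _).2 hmem
  rw [map_mul, map_inv, mul_inv_eq_one] at h1
  exact h1.trans (map_mul _ _ _)

lemma rel_right (m : M) (n n' : N) :
    tmul hM hN m (n * n')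
      = tmul hM hN m n * tmul hM hN (cnj hM (n : P) m) (cnj hN (n : P) n') := by
  have hmem : (FreeGroup.of (m, n * n') *
      (FreeGroup.of (m, n) *
        FreeGroup.of (cnj hM (n : P) m, cnj hN (n : P) n'))⁻¹) ∈
      Subgroup.normalClosure (tensorRels M N hM hN) :=
    Subgroup.subset_normalClosure (Or.inr ⟨m, n, n', rfl⟩)
  have h1 : PresentedGroup.mk (tensorRels M N hM hN)
      (FreeGroup.of (m, n * n') *
        (FreeGroup.of (m, n) *
          FreeGroup.of (cnj hM (n : P) m, cnj hN (n : P) n'))⁻¹) = 1 :=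
    (QuotientGroup.eq_one_iff _).2 hmem
  rw [map_mul, map_inv, mul_inv_eq_one] at h1
  exact h1.trans (map_mul _ _ _)

end NATaux

section Part2

variable {P : Type} [Group P]

namespace NATaux

variable {M N : Subgroup P} (hM : M.Normal) (hN : N.Normal)

/-- Lift a function respecting the tensor relations to a hom on `NATensor`. -/
def liftT {G : Type*} [Group G] (f : M → N → G)
    (h1 : ∀ (m m' : M) (n : N),
      f (m * m') n = f (cnj hM (m : P) m') (cnj hN (m : P) n) * f m n)
    (h2 : ∀ (m : M) (n n' : N),
      f m (n * n') = f m n * f (cnj hM (n : P) m) (cnj hN (n : P) n')) :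
    NATensor M N hM hN →* G :=
  PresentedGroup.toGroup (f := fun x : M × N => f x.1 x.2) (by
    rintro r (⟨m, m', n, rfl⟩ | ⟨m, n, n', rfl⟩) <;>
      simp only [map_mul, map_inv, FreeGroup.lift_apply_of, mul_inv_eq_one]
    · exact h1 m m' n
    · exact h2 m n n')

@[simp] lemma liftT_tmul {G : Type*} [Group G] (f : M → N → G) (h1) (h2) (m : M) (n : N) :
    liftT hM hN f h1 h2 (tmul hM hN m n) = f m n :=
  PresentedGroup.toGroup.of _

lemma homext {G : Type*} [Group G] {φ ψ : NATensor M N hM hN →* G}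
    (h : ∀ (m : M) (n : N), φ (tmul hM hN m n) = ψ (tmul hM hN m n)) : φ = ψ :=
  PresentedGroup.ext (fun x => h x.1 x.2)

lemma tmul_one_left (n : N) : tmul hM hN 1 n = 1 := by
  have := rel_left hM hN 1 1 n
  simp only [one_mul, Subgroup.coe_one, cnj_one] at this
  exact right_eq_mul.mp this

lemma tmul_one_right (m : M) : tmul hM hN m 1 = 1 := by
  have := rel_right hM hN m 1 1
  simp only [mul_one, Subgroup.coe_one, cnj_one] at this
  exact (left_eq_mul.mp this).symm ▸ rfl

lemma tmul_inv_left (m : M) (n : N) :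
    tmul hM hN m⁻¹ n = (tmul hM hN m (cnj hN ((m : P))⁻¹ n))⁻¹ := by
  have h := rel_left hM hN m m⁻¹ (cnj hN ((m : P))⁻¹ n)
  rw [mul_inv_cancel, tmul_one_left] at h
  have e1 : cnj hM (m : P) m⁻¹ = m⁻¹ := cnj_eq' hM (by push_cast; group)
  have e2 : cnj hN (m : P) (cnj hN ((m : P))⁻¹ n) = n := by
    rw [cnj_cnj]; exact cnj_eq' hN (by group)
  rw [e1, e2] at h
  exact eq_inv_of_mul_eq_one_left h.symm

lemma tmul_inv_right (m : M) (n : N) :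
    tmul hM hN m n⁻¹ = (tmul hM hN (cnj hM ((n : P))⁻¹ m) n)⁻¹ := by
  have h := rel_right hM hN (cnj hM ((n : P))⁻¹ m) n n⁻¹
  rw [mul_inv_cancel, tmul_one_right] at h
  have e1 : cnj hM (n : P) (cnj hM ((n : P))⁻¹ m) = m := by
    rw [cnj_cnj]; exact cnj_eq' hM (by group)
  have e2 : cnj hN (n : P) n⁻¹ = n⁻¹ := cnj_eq' hN (by push_cast; group)
  rw [e1, e2] at h
  exact eq_inv_of_mul_eq_one_right h.symm

end NATaux

end Part2
section Part3

variable {P : Type} [Group P]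

namespace NATaux

variable {M N : Subgroup P} (hM : M.Normal) (hN : N.Normal)

/-- Diagonal conjugation action of `p : P` on the tensor product, as a hom. -/
def actHom (p : P) : NATensor M N hM hN →* NATensor M N hM hN :=
  liftT hM hN (fun m n => tmul hM hN (cnj hM p m) (cnj hN p n))
    (by
      intro m m' n
      rw [cnj_mul, rel_left hM hN (cnj hM p m) (cnj hM p m') (cnj hN p n)]
      have e1 : cnj hM ((cnj hM p m : P)) (cnj hM p m') = cnj hM p (cnj hM (m : P) m') := by
        rw [cnj_cnj, cnj_cnj]; exact cnj_eq _ (by simp only [cnj_coe]; group)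
      have e2 : cnj hN ((cnj hM p m : P)) (cnj hN p n) = cnj hN p (cnj hN (m : P) n) := by
        rw [cnj_cnj, cnj_cnj]; exact cnj_eq _ (by simp only [cnj_coe]; group)
      rw [e1, e2])
    (by
      intro m n n'
      rw [cnj_mul, rel_right hM hN (cnj hM p m) (cnj hN p n) (cnj hN p n')]
      have e1 : cnj hM ((cnj hN p n : P)) (cnj hM p m) = cnj hM p (cnj hM (n : P) m) := by
        rw [cnj_cnj, cnj_cnj]; exact cnj_eq _ (by simp only [cnj_coe]; group)
      have e2 : cnj hN ((cnj hN p n : P)) (cnj hN p n') = cnj hN p (cnj hN (n : P) n') := by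
        rw [cnj_cnj, cnj_cnj]; exact cnj_eq _ (by simp only [cnj_coe]; group)
      rw [e1, e2])

@[simp] lemma actHom_tmul (p : P) (m : M) (n : N) :
    actHom hM hN p (tmul hM hN m n) = tmul hM hN (cnj hM p m) (cnj hN p n) :=
  liftT_tmul _ _ _ _ _ _ _

lemma actHom_actHom (p q : P) (x : NATensor M N hM hN) :
    actHom hM hN p (actHom hM hN q x) = actHom hM hN (p * q) x := by
  have : (actHom hM hN p).comp (actHom hM hN q) = actHom hM hN (p * q) :=
    homext hM hN (by intro m n; simp [cnj_cnj])
  exact DFunLike.congr_fun this x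

lemma actHom_one (x : NATensor M N hM hN) : actHom hM hN 1 x = x := by
  have : actHom hM hN (1 : P) = MonoidHom.id _ :=
    homext hM hN (by intro m n; simp)
  exact DFunLike.congr_fun this x

/-- Diagonal conjugation action of `P` on the tensor product. -/
def actLaut : P →* MulAut (NATensor M N hM hN) where
  toFun p :=
    { toFun := actHom hM hN p
      invFun := actHom hM hN p⁻¹
      left_inv := fun x => by rw [actHom_actHom, inv_mul_cancel, actHom_one]
      right_inv := fun x => by rw [actHom_actHom, mul_inv_cancel, actHom_one]
      map_mul' := map_mul _ }
  map_one' := by ext x; exact actHom_one hM hN x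
  map_mul' p q := by ext x; exact (actHom_actHom hM hN p q x).symm

@[simp] lemma actLaut_apply (p : P) (x : NATensor M N hM hN) :
    actLaut hM hN p x = actHom hM hN p x := rfl

/-- The key conjugation identity: conjugation by `m ⊗ n` is the diagonal
action of the commutator `[m, n]`. -/
lemma key_conj (m : M) (n : N) (a : M) (b : N) :
    tmul hM hN m n * tmul hM hN a b * (tmul hM hN m n)⁻¹
      = tmul hM hN (cnj hM ((m : P) * n * (m : P)⁻¹ * (n : P)⁻¹) a)
          (cnj hN ((m : P) * n * (m : P)⁻¹ * (n : P)⁻¹) b) := by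
  have key0 : ∀ (m' : M) (n' : N),
      tmul hM hN (cnj hM ((m : P) * n) m') (cnj hN ((m : P) * n) n') * tmul hM hN m n
        = tmul hM hN m n * tmul hM hN (cnj hM ((n : P) * m) m') (cnj hN ((n : P) * m) n') := by
    intro m' n'
    have c1 : cnj hM ((cnj hN (m : P) n : P)) (cnj hM (m : P) m') = cnj hM ((m : P) * n) m' := by
      rw [cnj_cnj]; exact cnj_eq _ (by simp only [cnj_coe]; group)
    have c2 : cnj hN ((cnj hN (m : P) n : P)) (cnj hN (m : P) n') = cnj hN ((m : P) * n) n' := by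
      rw [cnj_cnj]; exact cnj_eq _ (by simp only [cnj_coe]; group)
    have I : tmul hM hN (m * m') (n * n')
        = tmul hM hN (cnj hM (m : P) m') (cnj hN (m : P) n) *
            (tmul hM hN (cnj hM ((m : P) * n) m') (cnj hN ((m : P) * n) n') *
              (tmul hM hN m n *
                tmul hM hN (cnj hM (n : P) m) (cnj hN (n : P) n'))) := by
      rw [rel_left hM hN m m' (n * n'), cnj_mul,
        rel_right hM hN (cnj hM (m : P) m') (cnj hN (m : P) n) (cnj hN (m : P) n'),
        c1, c2, rel_right hM hN m n n']
      group
    have c3 : cnj hM ((cnj hM (n : P) m : P)) (cnj hM (n : P) m') = cnj hM ((n : P) * m) m' := by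
      rw [cnj_cnj]; exact cnj_eq _ (by simp only [cnj_coe]; group)
    have c4 : cnj hN ((cnj hM (n : P) m : P)) (cnj hN (n : P) n') = cnj hN ((n : P) * m) n' := by
      rw [cnj_cnj]; exact cnj_eq _ (by simp only [cnj_coe]; group)
    have II : tmul hM hN (m * m') (n * n')
        = tmul hM hN (cnj hM (m : P) m') (cnj hN (m : P) n) *
            (tmul hM hN m n *
              (tmul hM hN (cnj hM ((n : P) * m) m') (cnj hN ((n : P) * m) n') *
                tmul hM hN (cnj hM (n : P) m) (cnj hN (n : P) n'))) := by
      rw [rel_right hM hN (m * m') n n', rel_left hM hN m m' n, cnj_mul,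
        rel_left hM hN (cnj hM (n : P) m) (cnj hM (n : P) m') (cnj hN (n : P) n'),
        c3, c4]
      group
    have t1 := mul_left_cancel (I.symm.trans II)
    have t2 : (tmul hM hN (cnj hM ((m : P) * n) m') (cnj hN ((m : P) * n) n') *
          tmul hM hN m n) * tmul hM hN (cnj hM (n : P) m) (cnj hN (n : P) n')
        = (tmul hM hN m n *
            tmul hM hN (cnj hM ((n : P) * m) m') (cnj hN ((n : P) * m) n')) *
          tmul hM hN (cnj hM (n : P) m) (cnj hN (n : P) n') := by
      rw [mul_assoc, mul_assoc]; exact t1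
    exact mul_right_cancel t2
  have h := key0 (cnj hM (((n : P) * m))⁻¹ a) (cnj hN (((n : P) * m))⁻¹ b)
  rw [cnj_cnj, cnj_cnj, cnj_cnj, cnj_cnj] at h
  have ea : cnj hM ((n : P) * m * ((n : P) * m)⁻¹) a = a := cnj_eq' _ (by group)
  have eb : cnj hN ((n : P) * m * ((n : P) * m)⁻¹) b = b := cnj_eq' _ (by group)
  have ec1 : cnj hM ((m : P) * n * ((n : P) * m)⁻¹) a
      = cnj hM ((m : P) * n * (m : P)⁻¹ * (n : P)⁻¹) a := cnj_eq _ (by group)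
  have ec2 : cnj hN ((m : P) * n * ((n : P) * m)⁻¹) b
      = cnj hN ((m : P) * n * (m : P)⁻¹ * (n : P)⁻¹) b := cnj_eq _ (by group)
  rw [ea, eb, ec1, ec2] at h
  rw [← h, mul_inv_cancel_right]

end NATaux

end Part3
section Part4

variable {P : Type} [Group P]

namespace NATaux

variable {M N : Subgroup P} (hM : M.Normal) (hN : N.Normal)

/-- Conjugation action of `P` on a normal subgroup. -/
def conjAut {H : Subgroup P} (hH : H.Normal) : P →* MulAut H where
  toFun p :=
    { toFun := cnj hH p
      invFun := cnj hH p⁻¹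
      left_inv := fun a => by rw [cnj_cnj]; exact cnj_eq' _ (by group)
      right_inv := fun a => by rw [cnj_cnj]; exact cnj_eq' _ (by group)
      map_mul' := cnj_mul hH p }
  map_one' := MulEquiv.ext (cnj_one hH)
  map_mul' p q := MulEquiv.ext (fun a => (cnj_cnj hH p q a).symm)

@[simp] lemma conjAut_apply {H : Subgroup P} (hH : H.Normal) (p : P) (a : H) :
    conjAut hH p a = cnj hH p a := rfl

/-- `λ : M ⊗ N → M`, `m ⊗ n ↦ m ⋅ ⁿm⁻¹`. -/
def lamHom : NATensor M N hM hN →* M :=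
  liftT hM hN (fun m n => m * (cnj hM (n : P) m)⁻¹)
    (fun m m' n => Subtype.ext (by push_cast [cnj_coe]; group))
    (fun m n n' => Subtype.ext (by push_cast [cnj_coe]; group))

@[simp] lemma lamHom_tmul (m : M) (n : N) :
    lamHom hM hN (tmul hM hN m n) = m * (cnj hM (n : P) m)⁻¹ :=
  liftT_tmul _ _ _ _ _ _ _

/-- `λ' : M ⊗ N → N`, `m ⊗ n ↦ ᵐn ⋅ n⁻¹`. -/
def lam'Hom : NATensor M N hM hN →* N :=
  liftT hM hN (fun m n => cnj hN (m : P) n * n⁻¹)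
    (fun m m' n => Subtype.ext (by push_cast [cnj_coe]; group))
    (fun m n n' => Subtype.ext (by push_cast [cnj_coe]; group))

@[simp] lemma lam'Hom_tmul (m : M) (n : N) :
    lam'Hom hM hN (tmul hM hN m n) = cnj hN (m : P) n * n⁻¹ :=
  liftT_tmul _ _ _ _ _ _ _

lemma commP : M.subtype.comp (lamHom hM hN) = N.subtype.comp (lam'Hom hM hN) := by
  apply homext
  intro m n
  simp only [MonoidHom.comp_apply, lamHom_tmul, lam'Hom_tmul, Subgroup.coe_subtype]
  push_cast [cnj_coe]
  group

/-- The Peiffer identity: the action of `μ(λ l)` is conjugation by `l`. -/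
lemma act_lam (l x : NATensor M N hM hN) :
    actHom hM hN ((lamHom hM hN l : P)) x = l * x * l⁻¹ := by
  have main : (actLaut hM hN).comp (M.subtype.comp (lamHom hM hN))
      = MulAut.conj (G := NATensor M N hM hN) := by
    apply homext
    intro m n
    have hh : ((actLaut hM hN).comp (M.subtype.comp (lamHom hM hN))
          (tmul hM hN m n)).toMonoidHom
        = (MulAut.conj (tmul hM hN m n)).toMonoidHom := by
      apply homext
      intro a b
      simp only [MonoidHom.comp_apply, MulEquiv.coe_toMonoidHom, MulAut.conj_apply,
        actLaut_apply, actHom_tmul, lamHom_tmul, Subgroup.coe_subtype]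
      rw [key_conj]
      have e1 : cnj hM (((m * (cnj hM (n : P) m)⁻¹ : M) : P)) a
          = cnj hM ((m : P) * n * (m : P)⁻¹ * (n : P)⁻¹) a :=
        cnj_eq _ (by push_cast [cnj_coe]; group)
      have e2 : cnj hN (((m * (cnj hM (n : P) m)⁻¹ : M) : P)) b
          = cnj hN ((m : P) * n * (m : P)⁻¹ * (n : P)⁻¹) b :=
        cnj_eq _ (by push_cast [cnj_coe]; group)
      rw [e1, e2]
    exact MulEquiv.toMonoidHom_injective hh
  have h1 := DFunLike.congr_fun main l
  have h2 := DFunLike.congr_fun h1 x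
  simpa only [MonoidHom.comp_apply, Subgroup.coe_subtype, actLaut_apply,
    MulAut.conj_apply] using h2

lemma act_lam' (l x : NATensor M N hM hN) :
    actHom hM hN ((lam'Hom hM hN l : P)) x = l * x * l⁻¹ := by
  have : ((lam'Hom hM hN l : P)) = ((lamHom hM hN l : P)) := by
    have := DFunLike.congr_fun (commP hM hN) l
    simpa using this.symm
  rw [this]; exact act_lam hM hN l x

end NATaux

end Part4
section Part5

variable {P : Type} [Group P]

namespace NATaux

variable {M N : Subgroup P} (hM : M.Normal) (hN : N.Normal)

lemma h_lam_gen (m : M) (nb : N) (n : N) :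
    tmul hM hN (m * (cnj hM (nb : P) m)⁻¹) n
      = tmul hM hN m nb * actHom hM hN (n : P) (tmul hM hN m nb)⁻¹ := by
  have s1 : tmul hM hN (m * (cnj hM (nb : P) m)⁻¹) n
      = (tmul hM hN (cnj hM ((m : P) * nb) m)
          (cnj hN ((m : P) * nb * (m : P)⁻¹ * (nb : P)⁻¹) n))⁻¹ * tmul hM hN m n := by
    rw [rel_left hM hN m ((cnj hM (nb : P) m)⁻¹) n]
    have e1 : cnj hM (m : P) (cnj hM (nb : P) m)⁻¹ = (cnj hM ((m : P) * nb) m)⁻¹ := by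
      rw [cnj_inv, cnj_cnj]
    rw [e1, tmul_inv_left]
    have e2 : cnj hN (((cnj hM ((m : P) * nb) m : M) : P))⁻¹ (cnj hN (m : P) n)
        = cnj hN ((m : P) * nb * (m : P)⁻¹ * (nb : P)⁻¹) n := by
      rw [cnj_cnj]; exact cnj_eq _ (by simp only [cnj_coe]; group)
    rw [e2]
  have s2 : tmul hM hN (cnj hM ((m : P) * nb) m)
        (cnj hN ((m : P) * nb * (m : P)⁻¹ * (nb : P)⁻¹) n) * tmul hM hN m nb
      = tmul hM hN m nb * tmul hM hN (cnj hM (nb : P) m) n := by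
    have k := key_conj hM hN m nb (cnj hM (nb : P) m) n
    rw [cnj_cnj] at k
    have e3 : cnj hM ((m : P) * nb * (m : P)⁻¹ * (nb : P)⁻¹ * nb) m
        = cnj hM ((m : P) * nb) m := cnj_eq _ (by group)
    rw [e3] at k
    rw [← k, inv_mul_cancel_right]
  have s3 : tmul hM hN m nb * tmul hM hN (cnj hM (nb : P) m) n
      = tmul hM hN m (n * nb) := by
    have r := rel_right hM hN m nb (cnj hN ((nb : P))⁻¹ n)
    have e4 : cnj hN (nb : P) (cnj hN ((nb : P))⁻¹ n) = n := by
      rw [cnj_cnj]; exact cnj_eq' _ (by group)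
    have e5 : nb * cnj hN ((nb : P))⁻¹ n = n * nb :=
      Subtype.ext (by push_cast [cnj_coe]; group)
    rw [e4, e5] at r
    exact r.symm
  have s4 := rel_right hM hN m n nb
  have s5 : tmul hM hN (cnj hM ((m : P) * nb) m)
        (cnj hN ((m : P) * nb * (m : P)⁻¹ * (nb : P)⁻¹) n)
      = tmul hM hN m n * tmul hM hN (cnj hM (n : P) m) (cnj hN (n : P) nb) *
          (tmul hM hN m nb)⁻¹ := by
    rw [← s4, ← s3, ← s2, mul_inv_cancel_right]
  rw [s1, s5, map_inv, actHom_tmul]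
  group

lemma h_lam'_gen (mb : M) (n : N) (m : M) :
    tmul hM hN m (cnj hN (mb : P) n * n⁻¹)
      = actHom hM hN (m : P) (tmul hM hN mb n) * (tmul hM hN mb n)⁻¹ := by
  have s1 := rel_right hM hN m (cnj hN (mb : P) n) n⁻¹
  have e1 : cnj hN (((cnj hN (mb : P) n : N) : P)) n⁻¹
      = (cnj hN ((mb : P) * n * (mb : P)⁻¹ * (n : P)⁻¹) n)⁻¹ := by
    rw [cnj_inv]
    exact congrArg Inv.inv (cnj_eq _ (by simp only [cnj_coe]; group))
  rw [e1, tmul_inv_right] at s1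
  have e2 : cnj hM (((cnj hN ((mb : P) * n * (mb : P)⁻¹ * (n : P)⁻¹) n : N) : P))⁻¹
        (cnj hM (((cnj hN (mb : P) n : N) : P)) m)
      = cnj hM ((mb : P) * n * (mb : P)⁻¹ * (n : P)⁻¹) m := by
    rw [cnj_cnj]; exact cnj_eq _ (by simp only [cnj_coe]; group)
  rw [e2] at s1
  have s3 := key_conj hM hN mb n m n
  rw [← s3] at s1
  have s4 : tmul hM hN m (cnj hN (mb : P) n) * tmul hM hN mb n
      = tmul hM hN (m * mb) n := by
    have r := rel_left hM hN mb (cnj hM ((mb : P))⁻¹ m) n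
    have e3 : cnj hM (mb : P) (cnj hM ((mb : P))⁻¹ m) = m := by
      rw [cnj_cnj]; exact cnj_eq' _ (by group)
    have e4 : mb * cnj hM ((mb : P))⁻¹ m = m * mb :=
      Subtype.ext (by push_cast [cnj_coe]; group)
    rw [e3, e4] at r
    exact r.symm
  have s5 := rel_left hM hN m mb n
  rw [s1, actHom_tmul]
  calc tmul hM hN m (cnj hN (mb : P) n) *
        (tmul hM hN mb n * tmul hM hN m n * (tmul hM hN mb n)⁻¹)⁻¹
      = (tmul hM hN m (cnj hN (mb : P) n) * tmul hM hN mb n) *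
          (tmul hM hN m n)⁻¹ * (tmul hM hN mb n)⁻¹ := by group
    _ = tmul hM hN (m * mb) n * (tmul hM hN m n)⁻¹ * (tmul hM hN mb n)⁻¹ := by rw [s4]
    _ = (tmul hM hN (cnj hM (m : P) mb) (cnj hN (m : P) n) * tmul hM hN m n) *
          (tmul hM hN m n)⁻¹ * (tmul hM hN mb n)⁻¹ := by rw [← s5]
    _ = tmul hM hN (cnj hM (m : P) mb) (cnj hN (m : P) n) * (tmul hM hN mb n)⁻¹ := by
        group

end NATaux

end Part5
section Part6

variable {P : Type} [Group P]

namespace NATaux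

variable {M N : Subgroup P} (hM : M.Normal) (hN : N.Normal)

lemma pred_one (n : N) :
    tmul hM hN (lamHom hM hN (1 : NATensor M N hM hN)) n
      = 1 * actHom hM hN (n : P) (1 : NATensor M N hM hN)⁻¹ := by
  simp only [map_one, inv_one, one_mul, tmul_one_left]

lemma pred_mul (l l' : NATensor M N hM hN)
    (h : ∀ n : N, tmul hM hN (lamHom hM hN l) n = l * actHom hM hN (n : P) l⁻¹)
    (h' : ∀ n : N, tmul hM hN (lamHom hM hN l') n = l' * actHom hM hN (n : P) l'⁻¹)
    (n : N) :
    tmul hM hN (lamHom hM hN (l * l')) n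
      = (l * l') * actHom hM hN (n : P) (l * l')⁻¹ := by
  rw [map_mul, rel_left hM hN (lamHom hM hN l) (lamHom hM hN l') n,
    ← actHom_tmul hM hN ((lamHom hM hN l : P)), h' n, h n, act_lam,
    mul_inv_rev, map_mul]
  group

lemma pred_inv (l : NATensor M N hM hN)
    (h : ∀ n : N, tmul hM hN (lamHom hM hN l) n = l * actHom hM hN (n : P) l⁻¹)
    (n : N) :
    tmul hM hN (lamHom hM hN l⁻¹) n = l⁻¹ * actHom hM hN (n : P) (l⁻¹)⁻¹ := by
  rw [map_inv, tmul_inv_left, h (cnj hN ((lamHom hM hN l : P))⁻¹ n)]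
  have e : ((cnj hN ((lamHom hM hN l : P))⁻¹ n : N) : P)
      = ((lamHom hM hN l : P))⁻¹ * n * ((lamHom hM hN l : P)) := by
    rw [cnj_coe, inv_inv]
  rw [e, ← actHom_actHom, ← actHom_actHom, act_lam]
  have e1 : l * l⁻¹ * l⁻¹ = l⁻¹ := by group
  rw [e1]
  have e2 : ((lamHom hM hN l : P))⁻¹ = ((lamHom hM hN l⁻¹ : P)) := by
    rw [map_inv]; push_cast; rfl
  rw [e2, act_lam, map_inv, inv_inv]
  group

/-- The quotient map into `NATensor`, typed at `NATensor`. -/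
def mkT (w : FreeGroup (M × N)) : NATensor M N hM hN :=
  PresentedGroup.mk (tensorRels M N hM hN) w

lemma mkT_surjective (l : NATensor M N hM hN) : ∃ w, mkT hM hN w = l :=
  PresentedGroup.mk_surjective (tensorRels M N hM hN) l

lemma mkT_one : mkT hM hN 1 = 1 := map_one (PresentedGroup.mk (tensorRels M N hM hN))

lemma mkT_mul (x y : FreeGroup (M × N)) : mkT hM hN (x * y) = mkT hM hN x * mkT hM hN y :=
  map_mul (PresentedGroup.mk (tensorRels M N hM hN)) x y

lemma mkT_inv (x : FreeGroup (M × N)) : mkT hM hN x⁻¹ = (mkT hM hN x)⁻¹ :=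
  map_inv (PresentedGroup.mk (tensorRels M N hM hN)) x

lemma mkT_pure (x : M × N) : mkT hM hN (FreeGroup.of x) = tmul hM hN x.1 x.2 := rfl

lemma h_lam_full (l : NATensor M N hM hN) (n : N) :
    tmul hM hN (lamHom hM hN l) n = l * actHom hM hN (n : P) l⁻¹ := by
  obtain ⟨w, rfl⟩ := mkT_surjective hM hN l
  revert n
  refine FreeGroup.induction_on
    (C := fun w => ∀ n : N,
      tmul hM hN (lamHom hM hN (mkT hM hN w)) n
        = mkT hM hN w *
            actHom hM hN (n : P) (mkT hM hN w)⁻¹)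
    w ?_ ?_ ?_ ?_
  · intro n; rw [mkT_one]; exact pred_one hM hN n
  · intro x n
    rw [mkT_pure, lamHom_tmul]
    exact h_lam_gen hM hN x.1 x.2 n
  · intro x ih n
    rw [mkT_inv]
    exact pred_inv hM hN _ ih n
  · intro x y hx hy n
    rw [mkT_mul]
    exact pred_mul hM hN _ _ hx hy n

lemma pred'_mul (l l' : NATensor M N hM hN)
    (h : ∀ m : M, tmul hM hN m (lam'Hom hM hN l) = actHom hM hN (m : P) l * l⁻¹)
    (h' : ∀ m : M, tmul hM hN m (lam'Hom hM hN l') = actHom hM hN (m : P) l' * l'⁻¹)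
    (m : M) :
    tmul hM hN m (lam'Hom hM hN (l * l'))
      = actHom hM hN (m : P) (l * l') * (l * l')⁻¹ := by
  rw [map_mul, rel_right hM hN m (lam'Hom hM hN l) (lam'Hom hM hN l'),
    ← actHom_tmul hM hN ((lam'Hom hM hN l : P)), h' m, h m, act_lam',
    map_mul, mul_inv_rev]
  group

lemma pred'_inv (l : NATensor M N hM hN)
    (h : ∀ m : M, tmul hM hN m (lam'Hom hM hN l) = actHom hM hN (m : P) l * l⁻¹)
    (m : M) :
    tmul hM hN m (lam'Hom hM hN l⁻¹) = actHom hM hN (m : P) l⁻¹ * (l⁻¹)⁻¹ := by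
  rw [map_inv, tmul_inv_right, h (cnj hM ((lam'Hom hM hN l : P))⁻¹ m)]
  have e : ((cnj hM ((lam'Hom hM hN l : P))⁻¹ m : M) : P)
      = ((lam'Hom hM hN l : P))⁻¹ * m * ((lam'Hom hM hN l : P)) := by
    rw [cnj_coe, inv_inv]
  rw [e, ← actHom_actHom, ← actHom_actHom, act_lam']
  have e1 : l * l * l⁻¹ = l := by group
  rw [e1]
  have e2 : ((lam'Hom hM hN l : P))⁻¹ = ((lam'Hom hM hN l⁻¹ : P)) := by
    rw [map_inv]; push_cast; rfl
  rw [e2, act_lam', map_inv, inv_inv]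
  group

lemma h_lam'_full (m : M) (l : NATensor M N hM hN) :
    tmul hM hN m (lam'Hom hM hN l) = actHom hM hN (m : P) l * l⁻¹ := by
  obtain ⟨w, rfl⟩ := mkT_surjective hM hN l
  revert m
  refine FreeGroup.induction_on
    (C := fun w => ∀ m : M,
      tmul hM hN m (lam'Hom hM hN (mkT hM hN w))
        = actHom hM hN (m : P) (mkT hM hN w) *
            (mkT hM hN w)⁻¹)
    w ?_ ?_ ?_ ?_
  · intro m
    rw [mkT_one]
    simp only [map_one, inv_one, mul_one, tmul_one_right]
  · intro x m
    rw [mkT_pure, lam'Hom_tmul, actHom_tmul]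
    exact h_lam'_gen hM hN x.1 x.2 m
  · intro x ih m
    rw [mkT_inv]
    exact pred'_inv hM hN _ ih m
  · intro x y hx hy m
    rw [mkT_mul]
    exact pred'_mul hM hN _ _ hx hy m

end NATaux

end Part6

open NATaux

/-- For normal subgroups `M`, `N` of `P` (acting on each other and on
`M ⊗ N` by conjugation, diagonally on generators), the maps
`λ : M ⊗ N → M`, `m⊗n ↦ m·ⁿm⁻¹` and `λ' : M ⊗ N → N`, `m⊗n ↦ ᵐn·n⁻¹`
extend to group homomorphisms, and `(M ⊗ N, M, N, P)` with these maps, the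
inclusions `μ`, `ν`, and `h(m,n) = m ⊗ n` is a crossed square (the
Brown–Loday universal crossed square). -/
theorem naTensor_crossedSquare {M N : Subgroup P} (hM : M.Normal)
    (hN : N.Normal) :
    ∃ cs : CrossedSquare (NATensor M N hM hN) M N P,
      cs.mu = M.subtype ∧
      cs.nu = N.subtype ∧
      (∀ (m : M) (n : N), cs.h m n = tmul hM hN m n) ∧
      (∀ (m : M) (n : N),
        cs.lam (tmul hM hN m n) = m * (cnj hM (n : P) m)⁻¹) ∧
      (∀ (m : M) (n : N),
        cs.lam' (tmul hM hN m n) = cnj hN (m : P) n * n⁻¹) ∧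
      (∀ (p : P) (m : M), cs.actM p m = cnj hM p m) ∧
      (∀ (p : P) (n : N), cs.actN p n = cnj hN p n) ∧
      (∀ (p : P) (m : M) (n : N),
        cs.actL p (tmul hM hN m n) = tmul hM hN (cnj hM p m) (cnj hN p n)) := by
  refine ⟨{
    lam := lamHom hM hN
    lam' := lam'Hom hM hN
    mu := M.subtype
    nu := N.subtype
    actL := actLaut hM hN
    actM := conjAut hM
    actN := conjAut hN
    h := tmul hM hN
    comm := fun l => DFunLike.congr_fun (commP hM hN) l
    lam_equivariant := ?_
    lam'_equivariant := ?_
    mu_equivariant := fun p m => rfl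
    nu_equivariant := fun p n => rfl
    peiffer_lam := fun l l' => act_lam hM hN l l'
    peiffer_lam' := fun l l' => act_lam' hM hN l l'
    peiffer_mu := fun m m' => Subtype.ext (by push_cast [conjAut_apply, cnj_coe, Subgroup.coe_subtype]; group)
    peiffer_nu := fun n n' => Subtype.ext (by push_cast [conjAut_apply, cnj_coe, Subgroup.coe_subtype]; group)
    h_mul_left := fun m m' n => by
      simpa only [actLaut_apply, actHom_tmul, Subgroup.coe_subtype] using rel_left hM hN m m' n
    h_mul_right := fun m n n' => by
      simpa only [actLaut_apply, actHom_tmul, Subgroup.coe_subtype] using rel_right hM hN m n n'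
    lam_h := fun m n => by
      rw [lamHom_tmul]
      exact congrArg (fun z => m * z) (cnj_inv hM (n : P) m).symm
    lam'_h := fun m n => by rw [lam'Hom_tmul]; rfl
    h_lam := fun l n => h_lam_full hM hN l n
    h_lam' := fun m l => h_lam'_full hM hN m l
    h_equivariant := fun p m n => by
      simp only [actLaut_apply, actHom_tmul]; rfl
  }, rfl, rfl, fun m n => rfl, fun m n => lamHom_tmul hM hN m n,
    fun m n => lam'Hom_tmul hM hN m n, fun p m => rfl, fun p n => rfl,
    fun p m n => actHom_tmul hM hN p m n⟩
  · intro p l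
    have main : (lamHom hM hN).comp (actLaut hM hN p).toMonoidHom
        = (conjAut hM p).toMonoidHom.comp (lamHom hM hN) := by
      apply homext
      intro m n
      simp only [MonoidHom.comp_apply, MulEquiv.coe_toMonoidHom, actLaut_apply,
        actHom_tmul, lamHom_tmul, conjAut_apply]
      exact Subtype.ext (by push_cast [cnj_coe]; group)
    exact DFunLike.congr_fun main l
  · intro p l
    have main : (lam'Hom hM hN).comp (actLaut hM hN p).toMonoidHom
        = (conjAut hN p).toMonoidHom.comp (lam'Hom hM hN) := by
      apply homext
      intro m n
      simp only [MonoidHom.comp_apply, MulEquiv.coe_toMonoidHom, actLaut_apply,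
        actHom_tmul, lam'Hom_tmul, conjAut_apply]
      exact Subtype.ext (by push_cast [cnj_coe]; group)
    exact DFunLike.congr_fun main l
end
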